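/- arXiv:2202.10766 — 2 statements merged into one kernel-verified Lean document; each statement's English description precedes it below -/
import Mathlib

section
/- For every Datalog program Σ, annotated database (D,K,λ) with K a commutative ω-continuous semiring, and fact α, it holds that HMDT(Σ,D,K,λ,α) ⊑ NRT(Σ,D,K,λ,α) ⊑ AT(Σ,D,K,λ,α) and HMDT(Σ,D,K,λ,α) ⊑ MDT(Σ,D,K,λ,α) ⊑ AT(Σ,D,K,λ,α), where ⊑ is the natural order of K. -/
/-!
A hereditary minimal-depth tree is of minimal depth, and it is non-recursive: if a fact `b`
labelled a node and also one of its descendants, the subtree at the descendant would be a tree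
of `b` strictly shallower than the minimal-depth subtree at the ancestor. So `HMDT` is a subsum
of `NRT` and of `MDT`, and finite sums are monotone in the index set for the natural order.

All these sums are finite. Every constant of a derived fact occurs in `D` or in a rule head, so
the derivable facts lie in a finite set `U`, and by induction on `n` only finitely many trees have
depth at most `n`. A non-recursive tree has depth at most `|U|`, a minimal-depth tree of `α` at
most the depth of any tree of `α`. Finally the sums over the trees of depth at most `n` form an
ω-chain whose supremum is the least upper bound of all finite partial sums, i.e. `AT`, which
therefore dominates `NRT` and `MDT`.
-/

attribute [local instance] Classical.propDecidable

namespace Datalog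

/-- Terms are built from constants and variables. -/
inductive Term (C V : Type) : Type
  | const : C → Term C V
  | var : V → Term C V

/-- An atom over predicates `P` with arguments of type `τ`. -/
structure Atom (P τ : Type) : Type where
  pred : P
  args : List τ

/-- A fact (ground atom) has constants as arguments. -/
abbrev Fact (P C : Type) := Atom P C

/-- Substitution of a variable assignment in a term. -/
def Term.subst {C : Type} {n : ℕ} (σ : Fin n → C) : Term C (Fin n) → C
  | Term.const c => c
  | Term.var v => σ v

/-- Substitution of a variable assignment in an atom, producing a fact. -/
def Atom.subst {P C : Type} {n : ℕ} (σ : Fin n → C) (a : Atom P (Term C (Fin n))) : Fact P C :=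
  ⟨a.pred, a.args.map (Term.subst σ)⟩

/-- Renaming of predicates in an atom. -/
def Atom.mapPred {P Q τ : Type} (f : P → Q) (a : Atom P τ) : Atom Q τ := ⟨f a.pred, a.args⟩

/-- Turn a fact into a (ground) rule atom. -/
def Atom.toRuleAtom {P C : Type} (n : ℕ) (a : Fact P C) : Atom P (Term C (Fin n)) :=
  ⟨a.pred, a.args.map Term.const⟩

/-- A (normalized) Datalog rule `φ(x⃗,y⃗) → H(x⃗)`: the body is a conjunction of atoms over
variables `x⃗ ∪ y⃗` (every variable of the rule occurs in the body), the head a single atom. -/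
structure Rule (P C : Type) : Type where
  nvars : ℕ
  nbody : ℕ
  body : Fin nbody → Atom P (Term C (Fin nvars))
  head : Atom P (Term C (Fin nvars))
  vars_in_body : ∀ v : Fin nvars, ∃ i : Fin nbody, Term.var v ∈ (body i).args

variable {P C K : Type}

/-- A set of facts is closed under the rules of a program. -/
def ClosedUnder (prog : Set (Rule P C)) (I : Set (Fact P C)) : Prop :=
  ∀ r ∈ prog, ∀ σ : Fin r.nvars → C,
    (∀ i, (r.body i).subst σ ∈ I) → r.head.subst σ ∈ I

/-- `Σ, D ⊨ α` : the fact `α` belongs to every set of facts containing `D`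
and closed under the rules of `Σ`. -/
def Entails (prog : Set (Rule P C)) (D : Set (Fact P C)) (a : Fact P C) : Prop :=
  ∀ I : Set (Fact P C), D ⊆ I → ClosedUnder prog I → a ∈ I

/-- Derivation trees of a fact w.r.t. a program and a database: leaves are labeled by facts of
`D`; an inner node is labeled by a rule `r ∈ Σ` together with a homomorphism `σ`, its children
corresponding bijectively to the body atoms of `r`, and derives the fact `σ(head r)`. -/
inductive DTree {P C : Type} (prog : Set (Rule P C)) (D : Set (Fact P C)) : Fact P C → Type
  | leaf (a : Fact P C) (ha : a ∈ D) : DTree prog D a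
  | node (r : Rule P C) (hr : r ∈ prog) (σ : Fin r.nvars → C)
      (children : ∀ i : Fin r.nbody, DTree prog D ((r.body i).subst σ)) :
      DTree prog D (r.head.subst σ)

namespace DTree

variable {prog : Set (Rule P C)} {D : Set (Fact P C)}

/-- `Λ(t)`: the product of the annotations of the leaves of `t`. -/
def weight [CommSemiring K] (lam : Fact P C → K) : ∀ {a : Fact P C}, DTree prog D a → K
  | _, .leaf a _ => lam a
  | _, .node r _ _ ch => ∏ i : Fin r.nbody, weight lam (ch i)

/-- The depth of a derivation tree. -/
def depth : ∀ {a : Fact P C}, DTree prog D a → ℕ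
  | _, .leaf _ _ => 0
  | _, .node r _ _ ch => (Finset.univ.sup fun i : Fin r.nbody => depth (ch i)) + 1

/-- A derivation tree of `a` is of minimal depth if no derivation tree of `a` is of
smaller depth. -/
def minimalDepth {a : Fact P C} (t : DTree prog D a) : Prop :=
  ∀ t' : DTree prog D a, t.depth ≤ t'.depth

/-- A derivation tree is hereditary minimal-depth if every subtree rooted at an inner node
is a minimal-depth derivation tree of the fact it derives. -/
def hereditaryMinimal : ∀ {a : Fact P C}, DTree prog D a → Prop
  | _, .leaf _ _ => True
  | _, .node r hr σ ch =>
      minimalDepth (.node r hr σ ch) ∧ ∀ i, hereditaryMinimal (ch i)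

/-- `t.avoid s` : no fact labeling a node of `t` belongs to `s`, nor is repeated along a
root-to-leaf path. -/
def avoid : Set (Fact P C) → ∀ {a : Fact P C}, DTree prog D a → Prop
  | s, _, .leaf a _ => a ∉ s
  | s, _, .node r _ σ ch =>
      r.head.subst σ ∉ s ∧ ∀ i, avoid (insert (r.head.subst σ) s) (ch i)

/-- A derivation tree is non-recursive if it does not contain two nodes labeled with the same
fact such that one is a descendant of the other. -/
def nonRecursive {a : Fact P C} (t : DTree prog D a) : Prop := t.avoid ∅

/-- `t.hasLeaf x` : `x` labels some leaf of `t`. -/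
def hasLeaf (x : Fact P C) : ∀ {a : Fact P C}, DTree prog D a → Prop
  | _, .leaf a _ => a = x
  | _, .node _ _ _ ch => ∃ i, hasLeaf x (ch i)

end DTree

/-- The finite partial sums of `f` over the set `S`. -/
def partialSums {T : Type} [AddCommMonoid K] (S : Set T) (f : T → K) : Set K :=
  { x | ∃ F : Finset T, ↑F ⊆ S ∧ x = ∑ t ∈ F, f t }

/-- The (possibly infinite) sum of `f` over `S`, i.e. the least upper bound of the finite
partial sums (junk value `0` if no least upper bound exists). -/
noncomputable def setSum {T : Type} [AddCommMonoid K] [PartialOrder K]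
    (S : Set T) (f : T → K) : K :=
  if h : ∃ s, IsLUB (partialSums S f) s then h.choose else 0

/-- The greatest lower bound of a set of semiring elements (junk value `0` if none exists). -/
noncomputable def setInf [Zero K] [PartialOrder K] (S : Set K) : K :=
  if h : ∃ z, IsGLB S z then h.choose else 0

/-- A commutative ω-continuous semiring: the natural order `a ≤ b ↔ ∃ c, a + c = b` is a
partial order, every ω-chain has a least upper bound, and `+` and `×` preserve these
least upper bounds. -/
class OmegaCommSemiring (K : Type) extends CommSemiring K, PartialOrder K where
  le_iff_exists_add : ∀ a b : K, a ≤ b ↔ ∃ c, a + c = b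
  chain_lub : ∀ f : ℕ → K, Monotone f → ∃ s, IsLUB (Set.range f) s
  add_lub : ∀ (f : ℕ → K) (a s : K), Monotone f → IsLUB (Set.range f) s →
    IsLUB (Set.range fun n => a + f n) (a + s)
  mul_lub : ∀ (f : ℕ → K) (a s : K), Monotone f → IsLUB (Set.range f) s →
    IsLUB (Set.range fun n => a * f n) (a * s)

/-- A positive semiring: a product is zero iff one factor is, a sum is zero iff both
summands are. -/
def PositiveSemiring (K : Type) [CommSemiring K] : Prop :=
  (∀ a b : K, a * b = 0 ↔ a = 0 ∨ b = 0) ∧ (∀ a b : K, a + b = 0 ↔ a = 0 ∧ b = 0)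

/-- An annotated database: a set of facts together with an annotation function assigning a
semiring element to every fact (`0` outside the database). -/
structure AnnDB (P C K : Type) [Zero K] : Type where
  facts : Set (Fact P C)
  ann : Fact P C → K
  ann_eq_zero : ∀ a ∉ facts, ann a = 0

/-- Union of two annotated databases: annotations are added pointwise. -/
noncomputable def AnnDB.union [AddCommMonoid K] (d₁ d₂ : AnnDB P C K) : AnnDB P C K where
  facts := d₁.facts ∪ d₂.facts
  ann a := d₁.ann a + d₂.ann a
  ann_eq_zero a ha := by
    show d₁.ann a + d₂.ann a = 0
    rw [d₁.ann_eq_zero a fun h => ha (Set.mem_union_left _ h),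
      d₂.ann_eq_zero a fun h => ha (Set.mem_union_right _ h), add_zero]

/-- The facts derivable from `I` by one application of a rule of `prog`. -/
def derivable (prog : Set (Rule P C)) (I : Set (Fact P C)) : Set (Fact P C) :=
  { a | ∃ r ∈ prog, ∃ σ : Fin r.nvars → C,
      (∀ i, (r.body i).subst σ ∈ I) ∧ r.head.subst σ = a }

/-- The relational provenance of the immediate consequences: the sum over all rules and
homomorphisms deriving `a` of the product of the annotations of the body facts. -/
noncomputable def ruleSum [CommSemiring K] (prog : Set (Rule P C)) (I : Set (Fact P C))
    (lam : Fact P C → K) (a : Fact P C) : K :=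
  ∑ᶠ (p : (r : Rule P C) × (Fin r.nvars → C))
      (_ : p.1 ∈ prog ∧ (∀ i, (p.1.body i).subst p.2 ∈ I) ∧ p.1.head.subst p.2 = a),
    ∏ i : Fin p.1.nbody, lam ((p.1.body i).subst p.2)

/-- The annotation-aware immediate consequence operator `T_Σ`. -/
noncomputable def Tcons [CommSemiring K] (prog : Set (Rule P C)) (db : AnnDB P C K) :
    AnnDB P C K where
  facts := derivable prog db.facts
  ann a := if a ∈ derivable prog db.facts then ruleSum prog db.facts db.ann a else 0
  ann_eq_zero a ha := if_neg ha

/-- The operator `Δ_Σ`: `T_Σ` restricted to the newly derived facts. -/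
noncomputable def Dcons [CommSemiring K] (prog : Set (Rule P C)) (db : AnnDB P C K) :
    AnnDB P C K where
  facts := (Tcons prog db).facts \ db.facts
  ann a := if a ∈ (Tcons prog db).facts \ db.facts then (Tcons prog db).ann a else 0
  ann_eq_zero a ha := if_neg ha

/-- The naive evaluation sequence `I_n^0 := (D,K,λ)`, `I_n^{i+1} := T_Σ(I_n^i) ∪ (D,K,λ)`. -/
noncomputable def naiveSeq [CommSemiring K] (prog : Set (Rule P C)) (db : AnnDB P C K) :
    ℕ → AnnDB P C K
  | 0 => db
  | i + 1 => (Tcons prog (naiveSeq prog db i)).union db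

/-- The naive execution provenance semantics: the least upper bound of the annotations of `a`
along the naive evaluation sequence (and `0` if `a` is never derived). -/
noncomputable def NE [CommSemiring K] [PartialOrder K] (prog : Set (Rule P C))
    (db : AnnDB P C K) (a : Fact P C) : K :=
  if ∃ i, a ∈ (naiveSeq prog db i).facts then
    (if h : ∃ s, IsLUB (Set.range fun i => (naiveSeq prog db i).ann a) s then h.choose else 0)
  else 0

/-- The optimized naive evaluation sequence, which stops as soon as the target fact is
derived. -/
noncomputable def optSeq [CommSemiring K] (prog : Set (Rule P C)) (db : AnnDB P C K)
    (target : Fact P C) : ℕ → AnnDB P C K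
  | 0 => db
  | i + 1 =>
      if target ∈ (optSeq prog db target i).facts then optSeq prog db target i
      else (Tcons prog (optSeq prog db target i)).union db

/-- The optimized execution provenance semantics: the annotation of the target fact at the
stabilization point of the optimized naive evaluation sequence. -/
noncomputable def OE [CommSemiring K] (prog : Set (Rule P C)) (db : AnnDB P C K)
    (target : Fact P C) : K :=
  if h : ∃ k, ∀ ℓ, k ≤ ℓ → optSeq prog db target ℓ = optSeq prog db target k then
    (optSeq prog db target h.choose).ann target
  else 0

/-- The seminaive evaluation sequence `I_sn^0 := (D,K,λ)`, `I_sn^{i+1} := I_sn^i ∪ Δ_Σ(I_sn^i)`. -/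
noncomputable def semiSeq [CommSemiring K] (prog : Set (Rule P C)) (db : AnnDB P C K) :
    ℕ → AnnDB P C K
  | 0 => db
  | i + 1 => (semiSeq prog db i).union (Dcons prog (semiSeq prog db i))

/-- The seminaive execution provenance semantics: the annotation of the fact at the
stabilization point of the seminaive evaluation sequence. -/
noncomputable def SNE [CommSemiring K] (prog : Set (Rule P C)) (db : AnnDB P C K)
    (a : Fact P C) : K :=
  if h : ∃ k, ∀ ℓ, k ≤ ℓ → semiSeq prog db ℓ = semiSeq prog db k then
    (semiSeq prog db h.choose).ann a
  else 0

/-- The all-tree provenance semantics `AT`: the (possibly infinite) sum, over all derivation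
trees of `a`, of the product of the annotations of the leaves. -/
noncomputable def AT [CommSemiring K] [PartialOrder K] (prog : Set (Rule P C))
    (db : AnnDB P C K) (a : Fact P C) : K :=
  setSum (Set.univ : Set (DTree prog db.facts a)) fun t => t.weight db.ann

/-- The non-recursive tree provenance semantics `NRT`. -/
noncomputable def NRT [CommSemiring K] (prog : Set (Rule P C)) (db : AnnDB P C K)
    (a : Fact P C) : K :=
  ∑ᶠ (t : DTree prog db.facts a) (_ : t.nonRecursive), t.weight db.ann

/-- The minimal depth tree provenance semantics `MDT`. -/
noncomputable def MDT [CommSemiring K] (prog : Set (Rule P C)) (db : AnnDB P C K)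
    (a : Fact P C) : K :=
  ∑ᶠ (t : DTree prog db.facts a) (_ : t.minimalDepth), t.weight db.ann

/-- The hereditary minimal depth tree provenance semantics `HMDT`. -/
noncomputable def HMDT [CommSemiring K] (prog : Set (Rule P C)) (db : AnnDB P C K)
    (a : Fact P C) : K :=
  ∑ᶠ (t : DTree prog db.facts a) (_ : t.hereditaryMinimal), t.weight db.ann

/-- `σ'` agrees with `σ` on the head variables of `r` (i.e. `h'(x⃗) = h(x⃗)`). -/
def headAgree (r : Rule P C) (σ σ' : Fin r.nvars → C) : Prop :=
  ∀ v : Fin r.nvars, Term.var v ∈ r.head.args → σ' v = σ v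

/-- A `K`-annotated interpretation `(I,μ)` is a model of `Σ` and `(D,K,λ)`. -/
def IsAnnModel [CommSemiring K] [PartialOrder K] (prog : Set (Rule P C)) (db : AnnDB P C K)
    (I : Set (Fact P C)) (μ : Fact P C → K) : Prop :=
  db.facts ⊆ I ∧ (∀ a ∈ db.facts, db.ann a ≤ μ a) ∧
  ∀ r ∈ prog, ∀ σ : Fin r.nvars → C, (∀ i, (r.body i).subst σ ∈ I) →
    r.head.subst σ ∈ I ∧
    setSum {σ' : Fin r.nvars → C | (∀ i, (r.body i).subst σ' ∈ I) ∧ headAgree r σ σ'}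
        (fun σ' => ∏ i : Fin r.nbody, μ ((r.body i).subst σ'))
      ≤ μ (r.head.subst σ)

/-- The annotated model-based provenance semantics `AM`: the greatest lower bound, over all
annotated models, of the annotation of `a` (and `0` if `a` is not entailed). -/
noncomputable def AM [CommSemiring K] [PartialOrder K] (prog : Set (Rule P C))
    (db : AnnDB P C K) (a : Fact P C) : K :=
  if Entails prog db.facts a then
    setInf { x | ∃ I μ, IsAnnModel prog db I μ ∧ μ a = x }
  else 0

/-- A `K`-set-annotated interpretation `(I,μ)` is a model of `Σ` and `(D,K,λ)`. -/
def IsSetAnnModel [CommSemiring K] (prog : Set (Rule P C)) (db : AnnDB P C K)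
    (I : Set (Fact P C)) (μ : Fact P C → Set K) : Prop :=
  db.facts ⊆ I ∧ (∀ a ∈ db.facts, db.ann a ∈ μ a) ∧
  ∀ r ∈ prog, ∀ σ : Fin r.nvars → C, (∀ i, (r.body i).subst σ ∈ I) →
    r.head.subst σ ∈ I ∧
    ∀ g : Fin r.nbody → K, (∀ i, g i ∈ μ ((r.body i).subst σ)) →
      (∏ i, g i) ∈ μ (r.head.subst σ)

/-- The set-annotated model-based provenance semantics `SAM`: the sum of the elements of the
intersection, over all set-annotated models, of the annotation set of `a`. -/
noncomputable def SAM [CommSemiring K] [PartialOrder K] (prog : Set (Rule P C))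
    (db : AnnDB P C K) (a : Fact P C) : K :=
  setSum { k : K | ∀ I μ, IsSetAnnModel prog db I μ → k ∈ μ a } id

/-- The schema of a program: the predicates occurring in its rules. -/
def progSchema (prog : Set (Rule P C)) : Set P :=
  { p | ∃ r ∈ prog, r.head.pred = p ∨ ∃ i, (r.body i).pred = p }

/-- The schema of a database: the predicates occurring in its facts. -/
def dbSchema (D : Set (Fact P C)) : Set P := { p | ∃ a ∈ D, a.pred = p }

/-- The domain of a database: the constants occurring in its facts. -/
def dbConsts (D : Set (Fact P C)) : Set C := { c | ∃ a ∈ D, c ∈ a.args }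

/-- A ground rule built from a list of facts (the body) and a fact (the head). -/
def factRule (body : List (Fact P C)) (head : Fact P C) : Rule P C where
  nvars := 0
  nbody := body.length
  body := fun i => (body.get i).toRuleAtom 0
  head := head.toRuleAtom 0
  vars_in_body := fun v => v.elim0

/-- A ground instance of a rule. -/
def Rule.ground (r : Rule P C) (σ : Fin r.nvars → C) : Rule P C where
  nvars := 0
  nbody := r.nbody
  body := fun i => ((r.body i).subst σ).toRuleAtom 0
  head := (r.head.subst σ).toRuleAtom 0
  vars_in_body := fun v => v.elim0

/-- The grounding `Σ_D` of a program w.r.t. the domain of a database. -/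
def grounding (prog : Set (Rule P C)) (D : Set (Fact P C)) : Set (Rule P C) :=
  { r' | ∃ r ∈ prog, ∃ σ : Fin r.nvars → C, (∀ v, σ v ∈ dbConsts D) ∧ r' = r.ground σ }

/-- Renaming of predicates in a rule. -/
def Rule.mapPred {Q : Type} (f : P → Q) (r : Rule P C) : Rule Q C where
  nvars := r.nvars
  nbody := r.nbody
  body := fun i => (r.body i).mapPred f
  head := r.head.mapPred f
  vars_in_body := fun v => r.vars_in_body v

/-- An adornment of a rule: exactly one body atom is adorned (sent to the `Sum.inr` copy of
the predicates), the head is adorned or not, all the other atoms keep their predicates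
(`Sum.inl` copy). -/
def adornRule (r : Rule P C) (i : Fin r.nbody) (adornHead : Bool) : Rule (P ⊕ P) C where
  nvars := r.nvars
  nbody := r.nbody
  body := fun j => if j = i then (r.body j).mapPred Sum.inr else (r.body j).mapPred Sum.inl
  head := if adornHead then r.head.mapPred Sum.inr else r.head.mapPred Sum.inl
  vars_in_body := by
    intro v
    obtain ⟨j, hj⟩ := r.vars_in_body v
    refine ⟨j, ?_⟩
    try dsimp only
    split <;> exact hj

/-- The set of adornments of a rule. -/
def adornedRules (r : Rule P C) : Set (Rule (P ⊕ P) C) :=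
  { r' | ∃ (i : Fin r.nbody) (b : Bool), r' = adornRule r i b }

section DerivationTrees

variable {prog : Set (Rule P C)} {D : Set (Fact P C)}

theorem Rule.exists_mem_args_body_subst (r : Rule P C) (σ : Fin r.nvars → C) (v : Fin r.nvars) :
    ∃ i, σ v ∈ ((r.body i).subst σ).args := by
  obtain ⟨i, hi⟩ := r.vars_in_body v
  exact ⟨i, List.mem_map.mpr ⟨Term.var v, hi, rfl⟩⟩

def activeDomain (prog : Set (Rule P C)) (D : Set (Fact P C)) : Set C :=
  dbConsts D ∪ {c | ∃ r ∈ prog, Term.const c ∈ r.head.args}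

def candidateFacts (prog : Set (Rule P C)) (D : Set (Fact P C)) : Set (Fact P C) :=
  D ∪ ⋃ r ∈ prog, (fun σ : Fin r.nvars → C => r.head.subst σ) ''
    Set.univ.pi fun _ => activeDomain prog D

theorem activeDomain_finite (hp : prog.Finite) (hD : D.Finite) :
    (activeDomain prog D).Finite := by
  refine Set.Finite.union ?_ ?_
  · have : dbConsts D = ⋃ a ∈ D, {c | c ∈ a.args} := by ext; simp [dbConsts]
    rw [this]
    exact hD.biUnion fun a _ => a.args.finite_toSet
  · have : {c | ∃ r ∈ prog, Term.const c ∈ r.head.args} =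
        ⋃ r ∈ prog, Term.const ⁻¹' {t | t ∈ r.head.args} := by ext; simp
    rw [this]
    exact hp.biUnion fun r _ =>
      r.head.args.finite_toSet.preimage fun _ _ _ _ h => Term.const.inj h

theorem candidateFacts_finite (hp : prog.Finite) (hD : D.Finite) :
    (candidateFacts prog D).Finite :=
  hD.union <| hp.biUnion fun _ _ => (Set.Finite.pi fun _ => activeDomain_finite hp hD).image _

namespace DTree

theorem args_mem_activeDomain {a : Fact P C} (t : DTree prog D a) :
    ∀ c ∈ a.args, c ∈ activeDomain prog D := by
  induction t with
  | leaf a ha => exact fun c hc => Or.inl ⟨a, ha, hc⟩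
  | node r hr σ ch ih =>
    intro c hc
    obtain ⟨tm, htm, rfl⟩ := List.mem_map.mp hc
    cases tm with
    | const c => exact Or.inr ⟨r, hr, htm⟩
    | var v =>
      obtain ⟨i, hi⟩ := r.exists_mem_args_body_subst σ v
      exact ih i _ hi

theorem mem_candidateFacts {a : Fact P C} (t : DTree prog D a) : a ∈ candidateFacts prog D := by
  cases t with
  | leaf a ha => exact Or.inl ha
  | node r hr σ ch =>
    refine Or.inr (Set.mem_biUnion hr ⟨σ, fun v _ => ?_, rfl⟩)
    obtain ⟨i, hi⟩ := r.exists_mem_args_body_subst σ v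
    exact (ch i).args_mem_activeDomain _ hi

theorem depth_node_le_succ_iff {r : Rule P C} {hr : r ∈ prog} {σ : Fin r.nvars → C}
    {ch : ∀ i, DTree prog D ((r.body i).subst σ)} {n : ℕ} :
    (node r hr σ ch).depth ≤ n + 1 ↔ ∀ i, (ch i).depth ≤ n := by
  simp [depth]

theorem depth_lt_depth_node {r : Rule P C} {hr : r ∈ prog} {σ : Fin r.nvars → C}
    (ch : ∀ i, DTree prog D ((r.body i).subst σ)) (i : Fin r.nbody) :
    (ch i).depth < (node r hr σ ch).depth :=
  Nat.lt_succ_of_le (Finset.le_sup (f := fun i => (ch i).depth) (Finset.mem_univ i))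

theorem finite_sigma_depth_le (hp : prog.Finite) (hD : D.Finite) (n : ℕ) :
    {t : Σ a, DTree prog D a | t.2.depth ≤ n}.Finite := by
  have : Finite D := hD.to_subtype
  have hleaves := Set.finite_range fun a : D => (⟨a.1, .leaf a.1 a.2⟩ : Σ a, DTree prog D a)
  induction n with
  | zero =>
    refine hleaves.subset ?_
    rintro ⟨_, _ | _⟩ h
    · exact ⟨⟨_, ‹_›⟩, rfl⟩
    · simp [depth] at h
  | succ n ih =>
    -- a node is given by its rule, an assignment into `activeDomain` and shallower children
    have hfiber (b : Fact P C) : {t : DTree prog D b | t.depth ≤ n}.Finite :=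
      ih.preimage sigma_mk_injective.injOn
    refine (hleaves.union <| hp.biUnion' fun r hr =>
      (Set.Finite.pi fun _ => activeDomain_finite hp hD).biUnion fun σ _ =>
        (Set.Finite.pi fun i => hfiber ((r.body i).subst σ)).image
          fun ch => (⟨_, .node r hr σ ch⟩ : Σ a, DTree prog D a)).subset ?_
    rintro ⟨_, _ | ⟨r, hr, σ, ch⟩⟩ h
    · exact Or.inl ⟨⟨_, ‹_›⟩, rfl⟩
    · refine Or.inr (Set.mem_iUnion₂.mpr
        ⟨r, hr, Set.mem_biUnion (x := σ) (fun v _ => ?_) ⟨ch, ?_, rfl⟩⟩)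
      · obtain ⟨i, hi⟩ := r.exists_mem_args_body_subst σ v
        exact (ch i).args_mem_activeDomain _ hi
      · simpa [Set.mem_pi] using depth_node_le_succ_iff.mp h

theorem finite_setOf_depth_le (hp : prog.Finite) (hD : D.Finite) (n : ℕ) (a : Fact P C) :
    {t : DTree prog D a | t.depth ≤ n}.Finite :=
  (finite_sigma_depth_le hp hD n).preimage sigma_mk_injective.injOn

theorem depth_add_card_le_of_avoid {U : Finset (Fact P C)}
    (hU : ∀ {b : Fact P C}, DTree prog D b → b ∈ U) {a : Fact P C} (t : DTree prog D a) :
    ∀ s : Finset (Fact P C), s ⊆ U → t.avoid ↑s → t.depth + s.card ≤ U.card := by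
  induction t with
  | leaf a ha => exact fun s hs _ => by simpa [depth] using Finset.card_le_card hs
  | node r hr σ ch ih =>
    intro s hs hav
    have hnot : r.head.subst σ ∉ s := fun h => hav.1 (Finset.mem_coe.mpr h)
    have hins : insert (r.head.subst σ) s ⊆ U := Finset.insert_subset (hU (node r hr σ ch)) hs
    have hcard := Finset.card_le_card hins
    rw [Finset.card_insert_of_notMem hnot] at hcard
    have hch : ∀ i, (ch i).depth + (s.card + 1) ≤ U.card := fun i => by
      simpa [Finset.card_insert_of_notMem hnot] using
        ih i _ hins (by simpa only [Finset.coe_insert] using hav.2 i)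
    have : (node r hr σ ch).depth ≤ U.card - (s.card + 1) + 1 :=
      depth_node_le_succ_iff.mpr fun i => by have := hch i; omega
    omega

theorem finite_setOf_nonRecursive (hp : prog.Finite) (hD : D.Finite) (a : Fact P C) :
    {t : DTree prog D a | t.nonRecursive}.Finite := by
  set U := (candidateFacts_finite hp hD).toFinset
  refine (finite_setOf_depth_le hp hD U.card a).subset fun t ht => ?_
  simpa using depth_add_card_le_of_avoid
    (fun t => (Set.Finite.mem_toFinset _).mpr t.mem_candidateFacts) t ∅ (Finset.empty_subset _)
    (by simpa [nonRecursive] using ht)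

theorem finite_setOf_minimalDepth (hp : prog.Finite) (hD : D.Finite) (a : Fact P C) :
    {t : DTree prog D a | t.minimalDepth}.Finite := by
  rcases isEmpty_or_nonempty (DTree prog D a) with h | ⟨⟨t₀⟩⟩
  · exact Set.toFinite _
  · exact (finite_setOf_depth_le hp hD t₀.depth a).subset fun t ht => ht t₀

theorem hereditaryMinimal.minimalDepth {a : Fact P C} {t : DTree prog D a}
    (ht : t.hereditaryMinimal) : t.minimalDepth := by
  cases t with
  | leaf => exact fun _ => Nat.zero_le _
  | node => exact ht.1

/-- In the induction `s` holds the labels of the ancestors of `t`: each labels a minimal-depth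
subtree strictly deeper than `t`, so every tree of it is deeper than `t`. -/
theorem hereditaryMinimal.avoid {a : Fact P C} {t : DTree prog D a} (ht : t.hereditaryMinimal)
    (s : Set (Fact P C)) (hs : ∀ b ∈ s, ∀ t' : DTree prog D b, t.depth < t'.depth) :
    t.avoid s := by
  induction t generalizing s with
  | leaf a ha => exact fun hmem => lt_irrefl _ (hs a hmem (leaf a ha))
  | node r hr σ ch ih =>
    refine ⟨fun hmem => lt_irrefl _ (hs _ hmem _), fun i => ih i (ht.2 i) _ ?_⟩
    rintro b (rfl | hb) t'
    · exact (depth_lt_depth_node ch i).trans_le (ht.1 t')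
    · exact (depth_lt_depth_node ch i).trans (hs b hb t')

theorem hereditaryMinimal.nonRecursive {a : Fact P C} {t : DTree prog D a}
    (ht : t.hereditaryMinimal) : t.nonRecursive :=
  ht.avoid ∅ fun _ h => h.elim

end DTree

end DerivationTrees

theorem finsum_mem_le_finsum_mem_of_subset {T : Type} [AddCommMonoid K] [PartialOrder K]
    [CanonicallyOrderedAdd K] {f : T → K} {s t : Set T} (h : s ⊆ t) (ht : t.Finite) :
    ∑ᶠ x ∈ s, f x ≤ ∑ᶠ x ∈ t, f x := by
  rw [finsum_mem_eq_finite_toFinset_sum f (ht.subset h), finsum_mem_eq_finite_toFinset_sum f ht]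
  exact Finset.sum_le_sum_of_subset (Set.Finite.toFinset_subset_toFinset.mpr h)

theorem isLUB_setSum {T : Type} [AddCommMonoid K] [PartialOrder K] {S : Set T} {f : T → K}
    (h : ∃ L, IsLUB (partialSums S f) L) : IsLUB (partialSums S f) (setSum S f) := by
  rw [setSum, dif_pos h]
  exact h.choose_spec

theorem finsum_mem_le_setSum {T : Type} [AddCommMonoid K] [PartialOrder K] {S s : Set T}
    {f : T → K} (h : ∃ L, IsLUB (partialSums S f) L) (hs : s.Finite) (hsS : s ⊆ S) :
    ∑ᶠ x ∈ s, f x ≤ setSum S f :=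
  (isLUB_setSum h).1 ⟨hs.toFinset, by simpa using hsS, finsum_mem_eq_finite_toFinset_sum f hs⟩

section OmegaCommSemiring

variable [OmegaCommSemiring K]

instance OmegaCommSemiring.toCanonicallyOrderedAdd : CanonicallyOrderedAdd K where
  exists_add_of_le h :=
    let ⟨c, hc⟩ := (OmegaCommSemiring.le_iff_exists_add _ _).mp h
    ⟨c, hc.symm⟩
  le_self_add _ b := (OmegaCommSemiring.le_iff_exists_add _ _).mpr ⟨b, rfl⟩
  le_add_self a b := (OmegaCommSemiring.le_iff_exists_add _ _).mpr ⟨b, add_comm a b⟩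

theorem exists_isLUB_partialSums_of_exhaustion {T : Type} (f : T → K) (F : ℕ → Finset T)
    (hF : Monotone F) (hexh : ∀ s : Finset T, ∃ n, s ⊆ F n) :
    ∃ L, IsLUB (partialSums Set.univ f) L := by
  obtain ⟨L, hL⟩ := OmegaCommSemiring.chain_lub (fun n => ∑ t ∈ F n, f t)
    fun m n hmn => Finset.sum_le_sum_of_subset (hF hmn)
  refine ⟨L, ?_, fun b hb => hL.2 ?_⟩
  · rintro _ ⟨s, -, rfl⟩
    obtain ⟨n, hn⟩ := hexh s
    exact (Finset.sum_le_sum_of_subset hn).trans (hL.1 ⟨n, rfl⟩)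
  · rintro _ ⟨n, rfl⟩
    exact hb ⟨F n, Set.subset_univ _, rfl⟩

theorem DTree.exists_isLUB_partialSums_weight {prog : Set (Rule P C)} {D : Set (Fact P C)}
    (hp : prog.Finite) (hD : D.Finite) (lam : Fact P C → K) (a : Fact P C) :
    ∃ L, IsLUB (partialSums Set.univ fun t : DTree prog D a => t.weight lam) L :=
  exists_isLUB_partialSums_of_exhaustion _ (fun n => (finite_setOf_depth_le hp hD n a).toFinset)
    (fun _ _ hmn => Set.Finite.toFinset_subset_toFinset.mpr fun _ ht => le_trans ht hmn)
    fun s => ⟨s.sup depth, fun _ ht =>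
      (Set.Finite.mem_toFinset _).mpr (Finset.le_sup (f := depth) ht)⟩

end OmegaCommSemiring

theorem statement_9_general (P C K : Type) [OmegaCommSemiring K]
    (prog : Set (Rule P C)) (hprog : prog.Finite)
    (db : AnnDB P C K) (hfin : db.facts.Finite)
    (α : Fact P C) :
    (HMDT prog db α ≤ NRT prog db α ∧ NRT prog db α ≤ AT prog db α)
      ∧ (HMDT prog db α ≤ MDT prog db α ∧ MDT prog db α ≤ AT prog db α) := by
  have hAT := DTree.exists_isLUB_partialSums_weight hprog hfin db.ann α
  have hNR := DTree.finite_setOf_nonRecursive hprog hfin α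
  have hMD := DTree.finite_setOf_minimalDepth hprog hfin α
  exact ⟨⟨finsum_mem_le_finsum_mem_of_subset (fun _ ht => ht.nonRecursive) hNR,
      finsum_mem_le_setSum hAT hNR (Set.subset_univ _)⟩,
    finsum_mem_le_finsum_mem_of_subset (fun _ ht => ht.minimalDepth) hMD,
      finsum_mem_le_setSum hAT hMD (Set.subset_univ _)⟩

/-- `HMDT ⊑ NRT ⊑ AT` and `HMDT ⊑ MDT ⊑ AT`. -/
theorem statement_9 (P C K : Type) [OmegaCommSemiring K]
    (prog : Set (Rule P C)) (hprog : prog.Finite)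
    (db : AnnDB P C K) (hfin : db.facts.Finite)
    (hann : ∀ a ∈ db.facts, db.ann a ≠ 0) (α : Fact P C) :
    (HMDT prog db α ≤ NRT prog db α ∧ NRT prog db α ≤ AT prog db α)
      ∧ (HMDT prog db α ≤ MDT prog db α ∧ MDT prog db α ≤ AT prog db α) :=
  statement_9_general P C K prog hprog db hfin α

end Datalog
end

section
/- For every Datalog program Σ, annotated database (D,K,λ) with K a commutative ω-continuous semiring, and fact α, the intersection over all K-set-annotated models (I,μ) of Σ and (D,K,λ) of μ(α) equals the set { Λ(t) : t ∈ T(α) }; hence SAM(Σ,D,K,λ,α) = Σ_{k ∈ { Λ(t) : t ∈ T(α) }} k, i.e., SAM is the sum of the distinct annotations of the derivation trees of α. -/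
attribute [local instance] Classical.propDecidable

namespace Datalog

variable {P C K : Type}

/-!
Every set-annotated model contains, by induction on derivation trees, each derived fact together
with the weight of its tree; conversely, the facts having a derivation tree, annotated with the
weights of their trees, form a set-annotated model. So the intersection over all models is
exactly the set of tree weights.
-/

section SetAnnModel

variable [CommSemiring K] {prog : Set (Rule P C)} {db : AnnDB P C K}
  {I : Set (Fact P C)} {μ : Fact P C → Set K}

theorem IsSetAnnModel.mem_of_dTree (hM : IsSetAnnModel prog db I μ) :
    ∀ {a : Fact P C}, DTree prog db.facts a → a ∈ I
  | _, .leaf _ ha => hM.1 ha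
  | _, .node r hr σ ch => (hM.2.2 r hr σ fun i => hM.mem_of_dTree (ch i)).1

theorem IsSetAnnModel.weight_mem (hM : IsSetAnnModel prog db I μ) :
    ∀ {a : Fact P C} (t : DTree prog db.facts a), t.weight db.ann ∈ μ a
  | _, .leaf a ha => hM.2.1 a ha
  | _, .node r hr σ ch =>
      (hM.2.2 r hr σ fun i => hM.mem_of_dTree (ch i)).2
        (fun i => (ch i).weight db.ann) fun i => hM.weight_mem (ch i)

theorem isSetAnnModel_dTreeWeights :
    IsSetAnnModel prog db { a | Nonempty (DTree prog db.facts a) }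
      fun a => { k | ∃ t : DTree prog db.facts a, t.weight db.ann = k } := by
  refine ⟨fun a ha => ⟨.leaf a ha⟩, fun a ha => ⟨.leaf a ha, rfl⟩, ?_⟩
  intro r hr σ hbody
  have hch : ∀ i, Nonempty (DTree prog db.facts ((r.body i).subst σ)) := hbody
  refine ⟨⟨.node r hr σ fun i => (hch i).some⟩, fun g hg => ?_⟩
  choose t ht using hg
  exact ⟨.node r hr σ t, by simp only [DTree.weight, ht]⟩

theorem setAnnModels_inter_eq_dTreeWeights (a : Fact P C) :
    { k : K | ∀ I μ, IsSetAnnModel prog db I μ → k ∈ μ a }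
      = { k : K | ∃ t : DTree prog db.facts a, t.weight db.ann = k } := by
  ext k
  constructor
  · intro hk
    exact hk _ _ isSetAnnModel_dTreeWeights
  · rintro ⟨t, rfl⟩ I μ hM
    exact hM.weight_mem t

end SetAnnModel

theorem statement_16_general (P C K : Type) [OmegaCommSemiring K]
    (prog : Set (Rule P C)) (db : AnnDB P C K) (α : Fact P C) :
    { k : K | ∀ (I : Set (Fact P C)) (μ : Fact P C → Set K),
        IsSetAnnModel prog db I μ → k ∈ μ α }
        = { k : K | ∃ t : DTree prog db.facts α, t.weight db.ann = k }
      ∧ SAM prog db α =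
          setSum { k : K | ∃ t : DTree prog db.facts α, t.weight db.ann = k } id :=
  ⟨setAnnModels_inter_eq_dTreeWeights α, by rw [SAM, setAnnModels_inter_eq_dTreeWeights]⟩

/-- the intersection over all set-annotated models of the annotation set of
`α` is exactly the set of annotations of the derivation trees of `α`; hence `SAM` is the
sum of the distinct annotations of these trees. -/
theorem statement_16 (P C K : Type) [OmegaCommSemiring K]
    (prog : Set (Rule P C)) (hprog : prog.Finite)
    (db : AnnDB P C K) (hfin : db.facts.Finite)
    (hann : ∀ a ∈ db.facts, db.ann a ≠ 0) (α : Fact P C) :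
    { k : K | ∀ (I : Set (Fact P C)) (μ : Fact P C → Set K),
        IsSetAnnModel prog db I μ → k ∈ μ α }
        = { k : K | ∃ t : DTree prog db.facts α, t.weight db.ann = k }
      ∧ SAM prog db α =
          setSum { k : K | ∃ t : DTree prog db.facts α, t.weight db.ann = k } id :=
  statement_16_general P C K prog db α

end Datalog
end
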